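/- Let X be a δ-hyperbolic geodesic metric space. Then for every λ > 0 and C > 0 there exist λ' > 0 and C' > 0 such that whenever A and B are (λ, C)-quasigeodesic subspaces of X with A ∩ B ≠ ∅, the union A ∪ B is a (λ', C')-quasigeodesic subspace of X. -/

import Mathlib

/-!
Let `p ∈ A ∩ B` and `a, b ∈ A ∪ B`. Every point of a geodesic `[a, b]` is `δ`-close to
`[p, a] ∪ [p, b]`, and by the Morse lemma each of these two sides stays uniformly close to a
quasigeodesic inside `A` or inside `B`. Moving every point of `[a, b]` to a nearby point of
`A ∪ B` therefore gives a `(1, C')`-quasigeodesic in `A ∪ B`.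

The Morse lemma is proved as in Bridson–Haefliger III.H.1.7. A geodesic stays within
`δ log₂ n + K` of any chain of `n` steps of size at most `K` joining its endpoints (bisect the
chain and use thin triangles). If `g r₀` is a point of the geodesic at maximal distance `D` from
the quasigeodesic, leave the geodesic about `2D` before and after `r₀`, jump to the
quasigeodesic, and follow it: this chain avoids the open `D`-ball around `g r₀` and has `O(D)`
steps, so `D ≤ δ log₂ O(D) + K`, which bounds `D`.
-/

/-- `f` restricted to `[0, v]` is a (unit-speed) geodesic: `v ≥ 0` and `f` is an
isometric embedding of `[0, v]` into `X`. -/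
def IsGeodesicOn {X : Type*} [MetricSpace X] (f : ℝ → X) (v : ℝ) : Prop :=
  0 ≤ v ∧ ∀ x ∈ Set.Icc (0 : ℝ) v, ∀ y ∈ Set.Icc (0 : ℝ) v, dist (f x) (f y) = |x - y|

/-- `f : [0, v] → X` is a geodesic from `a` to `b`. -/
def IsGeodesicFrom {X : Type*} [MetricSpace X] (f : ℝ → X) (v : ℝ) (a b : X) : Prop :=
  IsGeodesicOn f v ∧ f 0 = a ∧ f v = b

/-- `X` is a geodesic metric space: any two points are joined by a geodesic. -/
def IsGeodesicSpace (X : Type*) [MetricSpace X] : Prop :=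
  ∀ a b : X, ∃ (f : ℝ → X) (v : ℝ), IsGeodesicFrom f v a b

/-- `X` is δ-hyperbolic (in the sense of Gromov, via thin triangles): for any geodesic
triangle with vertices `a`, `b`, `c`, the side `[b, c]` lies in the δ-neighbourhood of
the union of the sides `[a, b]` and `[a, c]`. -/
def IsDeltaHyperbolic (X : Type*) [MetricSpace X] (δ : ℝ) : Prop :=
  ∀ (a b c : X) (f₁ f₂ f₃ : ℝ → X) (v₁ v₂ v₃ : ℝ),
    IsGeodesicFrom f₁ v₁ a b → IsGeodesicFrom f₂ v₂ b c → IsGeodesicFrom f₃ v₃ a c →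
    ∀ x ∈ Set.Icc (0 : ℝ) v₂,
      Metric.infDist (f₂ x) (f₁ '' Set.Icc (0 : ℝ) v₁ ∪ f₃ '' Set.Icc (0 : ℝ) v₃) ≤ δ

/-- `A` is a geodesic subspace of `X`: any two points of `A` are joined by a geodesic
whose image lies in `A`. -/
def IsGeodesicSubspace {X : Type*} [MetricSpace X] (A : Set X) : Prop :=
  ∀ a ∈ A, ∀ b ∈ A, ∃ (f : ℝ → X) (v : ℝ),
    IsGeodesicFrom f v a b ∧ f '' Set.Icc (0 : ℝ) v ⊆ A

/-- `f` restricted to `[0, v]` is a `(lam, C)`-quasigeodesic. -/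
def IsQuasigeodesicOn {X : Type*} [MetricSpace X] (lam C : ℝ) (f : ℝ → X) (v : ℝ) : Prop :=
  0 ≤ v ∧ ∀ x ∈ Set.Icc (0 : ℝ) v, ∀ y ∈ Set.Icc (0 : ℝ) v,
    lam⁻¹ * |x - y| - C ≤ dist (f x) (f y) ∧ dist (f x) (f y) ≤ lam * |x - y| + C

/-- `A` is a `(lam, C)`-quasigeodesic subspace of `X`: any two points of `A` are joined
by a `(lam, C)`-quasigeodesic whose image lies in `A`. -/
def IsQuasigeodesicSubspace {X : Type*} [MetricSpace X] (lam C : ℝ) (A : Set X) : Prop :=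
  ∀ a ∈ A, ∀ b ∈ A, ∃ (f : ℝ → X) (v : ℝ),
    IsQuasigeodesicOn lam C f v ∧ f 0 = a ∧ f v = b ∧ f '' Set.Icc (0 : ℝ) v ⊆ A

/-- `S` is a geodesic segment: the image of an isometric embedding of a closed interval. -/
def IsGeodesicSegment {X : Type*} [MetricSpace X] (S : Set X) : Prop :=
  ∃ (f : ℝ → X) (v : ℝ), IsGeodesicOn f v ∧ S = f '' Set.Icc (0 : ℝ) v

open Set Metric

section

variable {X : Type*} [MetricSpace X]

theorem IsGeodesicOn.reverse {f : ℝ → X} {v : ℝ} (hf : IsGeodesicOn f v) :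
    IsGeodesicOn (fun x => f (v - x)) v := by
  refine ⟨hf.1, fun x hx y hy => ?_⟩
  rw [hf.2 _ ⟨by linarith [hx.2], by linarith [hx.1]⟩ _ ⟨by linarith [hy.2], by linarith [hy.1]⟩,
    ← abs_neg]
  ring_nf

theorem IsGeodesicFrom.reverse {f : ℝ → X} {v : ℝ} {a b : X} (hf : IsGeodesicFrom f v a b) :
    IsGeodesicFrom (fun x => f (v - x)) v b a :=
  ⟨hf.1.reverse, by simpa using hf.2.2, by simpa using hf.2.1⟩

theorem image_comp_const_sub_Icc {α : Type*} (f : ℝ → α) (v : ℝ) :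
    (fun x => f (v - x)) '' Icc 0 v = f '' Icc 0 v := by
  rw [← image_image f (v - ·), image_const_sub_Icc, sub_self, sub_zero]

theorem IsGeodesicFrom.length_eq {f : ℝ → X} {v : ℝ} {a b : X} (hf : IsGeodesicFrom f v a b) :
    v = dist a b := by
  rw [← hf.2.1, ← hf.2.2, hf.1.2 0 (left_mem_Icc.2 hf.1.1) v (right_mem_Icc.2 hf.1.1), zero_sub,
    abs_neg, abs_of_nonneg hf.1.1]

theorem IsGeodesicOn.dist_zero_eq {f : ℝ → X} {v x : ℝ} (hf : IsGeodesicOn f v)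
    (hx : x ∈ Icc 0 v) : dist (f 0) (f x) = x := by
  rw [hf.2 0 (left_mem_Icc.2 hf.1) x hx, zero_sub, abs_neg, abs_of_nonneg hx.1]

theorem IsGeodesicOn.shift {f : ℝ → X} {v s t : ℝ} (hf : IsGeodesicOn f v) (hs : 0 ≤ s)
    (hst : s ≤ t) (ht : t ≤ v) : IsGeodesicFrom (fun x => f (s + x)) (t - s) (f s) (f t) := by
  refine ⟨⟨sub_nonneg.2 hst, fun x hx y hy => ?_⟩, by simp, by simp⟩
  rw [hf.2 _ ⟨by linarith [hx.1], by linarith [hx.2]⟩ _ ⟨by linarith [hy.1], by linarith [hy.2]⟩]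
  ring_nf

theorem IsGeodesicOn.continuousOn {f : ℝ → X} {v : ℝ} (hf : IsGeodesicOn f v) :
    ContinuousOn f (Icc 0 v) :=
  LipschitzOnWith.continuousOn (K := 1) <| LipschitzOnWith.of_dist_le_mul fun x hx y hy => by
    rw [hf.2 x hx y hy, Real.dist_eq, NNReal.coe_one, one_mul]

theorem IsGeodesicOn.isCompact_image {f : ℝ → X} {v : ℝ} (hf : IsGeodesicOn f v) :
    IsCompact (f '' Icc 0 v) :=
  isCompact_Icc.image_of_continuousOn hf.continuousOn

theorem IsQuasigeodesicOn.const_nonneg {lam C u : ℝ} {α : ℝ → X}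
    (hα : IsQuasigeodesicOn lam C α u) : 0 ≤ C := by
  simpa using (hα.2 0 (left_mem_Icc.2 hα.1) 0 (left_mem_Icc.2 hα.1)).2

theorem IsQuasigeodesicOn.abs_sub_le {lam C u x y : ℝ} {α : ℝ → X}
    (hα : IsQuasigeodesicOn lam C α u) (hlam : 0 < lam) (hx : x ∈ Icc 0 u) (hy : y ∈ Icc 0 u) :
    |x - y| ≤ lam * (dist (α x) (α y) + C) := by
  rw [← inv_mul_le_iff₀ hlam]
  linarith [(hα.2 x hx y hy).1]

theorem IsDeltaHyperbolic.mono {δ δ' : ℝ} (h : IsDeltaHyperbolic X δ) (hδ : δ ≤ δ') :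
    IsDeltaHyperbolic X δ' :=
  fun a b c f₁ f₂ f₃ v₁ v₂ v₃ h₁ h₂ h₃ x hx => (h a b c f₁ f₂ f₃ v₁ v₂ v₃ h₁ h₂ h₃ x hx).trans hδ

theorem IsDeltaHyperbolic.exists_dist_le {δ v₁ v₂ v₃ : ℝ} {a b c : X} {f₁ f₂ f₃ : ℝ → X}
    (hX : IsDeltaHyperbolic X δ) (h₁ : IsGeodesicFrom f₁ v₁ a b) (h₂ : IsGeodesicFrom f₂ v₂ b c)
    (h₃ : IsGeodesicFrom f₃ v₃ a c) {x : ℝ} (hx : x ∈ Icc 0 v₂) :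
    ∃ y ∈ f₁ '' Icc 0 v₁ ∪ f₃ '' Icc 0 v₃, dist (f₂ x) y ≤ δ := by
  obtain ⟨y, hy, hxy⟩ := (h₁.1.isCompact_image.union h₃.1.isCompact_image).exists_infDist_eq_dist
    ⟨f₁ 0, .inl (mem_image_of_mem f₁ (left_mem_Icc.2 h₁.1.1))⟩ (f₂ x)
  exact ⟨y, hy, hxy ▸ hX a b c f₁ f₂ f₃ v₁ v₂ v₃ h₁ h₂ h₃ x hx⟩

theorem exists_chain_of_dist_le {φ : ℝ → X} {s t L C : ℝ} (hL : 0 ≤ L)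
    (hφ : ∀ x ∈ uIcc s t, ∀ y ∈ uIcc s t, dist (φ x) (φ y) ≤ L * |x - y| + C) :
    ∃ (n : ℕ) (z : ℕ → X), (n : ℝ) ≤ |t - s| + 1 ∧ z 0 = φ s ∧ z n = φ t ∧
      (∀ i, z i ∈ φ '' uIcc s t) ∧ ∀ i, dist (z i) (z (i + 1)) ≤ L + C := by
  set n := ⌈|t - s|⌉₊
  set τ : ℕ → ℝ := fun i => AffineMap.lineMap s t ((min i n : ℕ) / n : ℝ)
  have hτ : ∀ i, τ i ∈ uIcc s t := fun i =>
    convex_uIcc s t |>.lineMap_mem left_mem_uIcc right_mem_uIcc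
      ⟨by positivity, div_le_one_of_le₀ (by exact_mod_cast min_le_right i n) n.cast_nonneg⟩
  have hτ_succ : ∀ i, |τ i - τ (i + 1)| ≤ 1 := fun i => by
    have hmin : |((min i n : ℕ) : ℝ) - (min (i + 1) n : ℕ)| ≤ 1 := by
      have h₁ : ((min i n : ℕ) : ℝ) ≤ (min (i + 1) n : ℕ) := Nat.cast_le.2 (by omega)
      have h₂ : ((min (i + 1) n : ℕ) : ℝ) ≤ (min i n : ℕ) + 1 := by
        rw [← Nat.cast_succ]; exact Nat.cast_le.2 (by omega)
      rw [abs_le]; constructor <;> linarith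
    rw [← Real.dist_eq, dist_lineMap_lineMap, Real.dist_eq, Real.dist_eq, ← sub_div, abs_div,
      Nat.abs_cast, div_mul_eq_mul_div, abs_sub_comm s t]
    refine div_le_one_of_le₀ ?_ n.cast_nonneg
    calc _ ≤ 1 * |t - s| := by gcongr
      _ ≤ n := by rw [one_mul]; exact Nat.le_ceil _
  refine ⟨n, φ ∘ τ, (Nat.ceil_lt_add_one (abs_nonneg _)).le, by simp [τ], ?_,
    fun i => mem_image_of_mem φ (hτ i), fun i => ?_⟩
  · rcases Nat.eq_zero_or_pos n with hn | hn
    · have : t = s := by simpa [n, sub_eq_zero] using hn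
      simp [τ, hn, this]
    · simp [τ, hn.ne']
  · calc dist (φ (τ i)) (φ (τ (i + 1))) ≤ L * |τ i - τ (i + 1)| + C := hφ _ (hτ i) _ (hτ (i + 1))
      _ ≤ L * 1 + C := by gcongr; exact hτ_succ i
      _ = L + C := by ring

theorem IsGeodesicFrom.exists_chain {γ : ℝ → X} {v : ℝ} {a b : X}
    (hγ : IsGeodesicFrom γ v a b) :
    ∃ (n : ℕ) (z : ℕ → X), (n : ℝ) ≤ v + 1 ∧ z 0 = a ∧ z n = b ∧
      (∀ i, z i ∈ γ '' Icc 0 v) ∧ ∀ i, dist (z i) (z (i + 1)) ≤ 1 := by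
  have hv := hγ.1.1
  obtain ⟨n, z, hn, hz0, hzn, hz, hzK⟩ := exists_chain_of_dist_le (φ := γ) (s := 0) (t := v)
    (C := 0) zero_le_one fun x hx y hy => by
      rw [uIcc_of_le hv] at hx hy; rw [hγ.1.2 x hx y hy]; ring_nf; rfl
  rw [uIcc_of_le hv] at hz
  exact ⟨n, z, by simpa [abs_of_nonneg hv] using hn, hz0.trans hγ.2.1, hzn.trans hγ.2.2, hz,
    by simpa using hzK⟩

theorem IsQuasigeodesicOn.exists_chain {lam C u t₁ t₂ : ℝ} {α : ℝ → X}
    (hα : IsQuasigeodesicOn lam C α u) (hlam : 0 < lam) (ht₁ : t₁ ∈ Icc 0 u)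
    (ht₂ : t₂ ∈ Icc 0 u) :
    ∃ (n : ℕ) (z : ℕ → X), (n : ℝ) ≤ lam * (dist (α t₁) (α t₂) + C) + 1 ∧ z 0 = α t₁ ∧
      z n = α t₂ ∧ (∀ i, z i ∈ α '' Icc 0 u) ∧ ∀ i, dist (z i) (z (i + 1)) ≤ lam + C := by
  have hsub : uIcc t₁ t₂ ⊆ Icc 0 u := uIcc_subset_Icc ht₁ ht₂
  obtain ⟨n, z, hn, hz0, hzn, hz, hzK⟩ := exists_chain_of_dist_le (φ := α) hlam.le
    fun x hx y hy => (hα.2 x (hsub hx) y (hsub hy)).2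
  refine ⟨n, z, ?_, hz0, hzn, fun i => image_mono hsub (hz i), hzK⟩
  rw [abs_sub_comm] at hn
  linarith [hα.abs_sub_le hlam ht₁ ht₂]

theorem exists_chain_append {K : ℝ} {P : X → Prop} {z₁ z₂ : ℕ → X} {n₁ : ℕ}
    (h₁ : ∀ i, dist (z₁ i) (z₁ (i + 1)) ≤ K) (h₂ : ∀ i, dist (z₂ i) (z₂ (i + 1)) ≤ K)
    (hP₁ : ∀ i, P (z₁ i)) (hP₂ : ∀ i, P (z₂ i)) (hjoin : z₁ n₁ = z₂ 0) :
    ∃ z : ℕ → X, z 0 = z₁ 0 ∧ (∀ n₂, z (n₁ + n₂) = z₂ n₂) ∧ (∀ i, P (z i)) ∧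
      ∀ i, dist (z i) (z (i + 1)) ≤ K := by
  refine ⟨fun i => if i ≤ n₁ then z₁ i else z₂ (i - n₁), by simp, fun n₂ => ?_,
    fun i => by dsimp only; split_ifs <;> simp [hP₁, hP₂], fun i => ?_⟩
  · rcases Nat.eq_zero_or_pos n₂ with rfl | hn₂
    · simp [hjoin]
    · simp [show ¬ n₁ + n₂ ≤ n₁ by omega]
  · dsimp only
    rcases lt_trichotomy i n₁ with hi | rfl | hi
    · simpa [hi.le, Nat.succ_le_of_lt hi] using h₁ i
    · simpa [hjoin] using h₂ 0
    · simpa [hi.not_ge, show ¬ i + 1 ≤ n₁ by omega, Nat.sub_add_comm hi.le] using h₂ (i - n₁)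

theorem exists_dist_le_of_chain {δ K v : ℝ} {j n : ℕ} {z : ℕ → X} {g : ℝ → X} {y : X}
    (hgeo : IsGeodesicSpace X) (hX : IsDeltaHyperbolic X δ)
    (hz : ∀ i, dist (z i) (z (i + 1)) ≤ K) (hn : n ≤ 2 ^ j)
    (hg : IsGeodesicFrom g v (z 0) (z n)) (hy : y ∈ g '' Icc 0 v) :
    ∃ k, dist y (z k) ≤ δ * j + K := by
  induction j generalizing z n g v y with
  | zero =>
    obtain ⟨x, hx, rfl⟩ := hy
    have hv : v ≤ K := by
      rw [hg.length_eq]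
      interval_cases n
      · simpa using dist_nonneg.trans (hz 0)
      · exact hz 0
    refine ⟨0, ?_⟩
    rw [← hg.2.1, dist_comm, hg.1.dist_zero_eq hx, Nat.cast_zero, mul_zero, zero_add]
    exact hx.2.trans hv
  | succ j ih =>
    obtain ⟨x, hx, rfl⟩ := hy
    have hpow : 2 ^ (j + 1) = 2 * 2 ^ j := by ring
    obtain ⟨f₁, v₁, hf₁⟩ := hgeo (z (n / 2)) (z 0)
    obtain ⟨f₃, v₃, hf₃⟩ := hgeo (z (n / 2)) (z n)
    obtain ⟨y, hy, hxy⟩ := hX.exists_dist_le hf₁ hg hf₃ hx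
    suffices ∃ k, dist y (z k) ≤ δ * j + K by
      obtain ⟨k, hk⟩ := this
      exact ⟨k, by push_cast; linarith [dist_triangle (g x) y (z k)]⟩
    rcases hy with hy | hy
    · rw [← image_comp_const_sub_Icc] at hy
      exact ih hz (by omega) hf₁.reverse hy
    · have hf₃' : IsGeodesicFrom f₃ v₃ (z (n / 2 + 0)) (z (n / 2 + (n - n / 2))) := by
        rwa [add_zero, Nat.add_sub_cancel' (Nat.div_le_self n 2)]
      obtain ⟨k, hk⟩ := ih (z := fun i => z (n / 2 + i)) (fun i => hz (n / 2 + i)) (by omega)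
        hf₃' hy
      exact ⟨n / 2 + k, hk⟩

theorem Nat.sq_le_two_pow_succ (c : ℕ) : c ^ 2 ≤ 2 ^ (c + 1) := by
  induction c with
  | zero => norm_num
  | succ c ih =>
    have := c.lt_two_pow_self
    calc (c + 1) ^ 2 = c ^ 2 + 2 * c + 1 := by ring
      _ ≤ 2 ^ (c + 1) + 2 * 2 ^ c := by omega
      _ = 2 ^ (c + 1 + 1) := by ring

theorem Nat.sq_clog_two_le (n : ℕ) : Nat.clog 2 n ^ 2 ≤ 4 * n := by
  rcases le_or_gt n 1 with hn | hn
  · simp [Nat.clog_of_right_le_one hn]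
  obtain ⟨c, hc⟩ : ∃ c, Nat.clog 2 n = c + 1 :=
    Nat.exists_eq_add_one_of_ne_zero (Nat.clog_pos one_lt_two hn).ne'
  have hlt := Nat.pow_pred_clog_lt_self one_lt_two hn
  simp only [hc, Nat.pred_eq_sub_one, Nat.add_sub_cancel] at hlt
  rw [hc]
  calc (c + 1) ^ 2 ≤ 2 ^ (c + 2) := (c + 1).sq_le_two_pow_succ
    _ = 4 * 2 ^ c := by ring
    _ ≤ 4 * n := by omega

theorem le_of_le_mul_clog {δ K c₁ c₂ D : ℝ} {n : ℕ} (hδ : 0 ≤ δ) (hK : 0 ≤ K) (hc₁ : 0 ≤ c₁)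
    (hc₂ : 0 ≤ c₂) (hn : (n : ℝ) ≤ c₁ * D + c₂) (hD : D ≤ δ * Nat.clog 2 n + K) :
    D ≤ δ * (4 * c₁ * δ + 4 * c₁ * K + 4 * c₂ + 1) + K := by
  have hsq : ((Nat.clog 2 n : ℕ) : ℝ) ^ 2 ≤ 4 * n := by exact_mod_cast n.sq_clog_two_le
  set c : ℝ := (Nat.clog 2 n : ℝ)
  have hc : c ^ 2 ≤ 4 * c₁ * δ * c + (4 * c₁ * K + 4 * c₂) := by nlinarith
  have hc' : c ≤ 4 * c₁ * δ + (4 * c₁ * K + 4 * c₂) + 1 := by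
    have : 0 ≤ c := Nat.cast_nonneg _
    nlinarith [mul_nonneg hc₁ hδ, mul_nonneg hc₁ hK]
  nlinarith

/-- Where the detour around `g r₀` leaves the geodesic: `2 (D + 1)` before `r₀`, or at the
start `g 0 ∈ S` if `r₀` is closer to it. -/
theorem exists_detour_start {g : ℝ → X} {S : Set X} {ℓ r₀ D : ℝ} (hg : IsGeodesicOn g ℓ)
    (h0 : g 0 ∈ S) (hD : ∀ r ∈ Icc 0 ℓ, infDist (g r) S ≤ D) (hr₀ : r₀ ∈ Icc 0 ℓ) :
    ∃ s ∈ Icc 0 r₀, ∃ y ∈ S, r₀ - s ≤ 2 * (D + 1) ∧ dist (g s) y ≤ D + 1 ∧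
      (2 * (D + 1) ≤ dist (g r₀) (g s) ∨ g s = y) := by
  have hD0 : 0 ≤ D := infDist_nonneg.trans (hD 0 (left_mem_Icc.2 hg.1))
  rcases le_or_gt r₀ (2 * (D + 1)) with hr | hr
  · exact ⟨0, left_mem_Icc.2 hr₀.1, g 0, h0, by simpa using hr, by simp; linarith, .inr rfl⟩
  set s := r₀ - 2 * (D + 1)
  have hs : s ∈ Icc 0 r₀ := ⟨by linarith, by linarith⟩
  have hs' : s ∈ Icc 0 ℓ := ⟨hs.1, hs.2.trans hr₀.2⟩
  obtain ⟨y, hy, hsy⟩ := (infDist_lt_iff ⟨_, h0⟩).1 ((hD s hs').trans_lt (lt_add_one D))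
  refine ⟨s, hs, y, hy, by simp [s], hsy.le, .inl ?_⟩
  rw [hg.2 r₀ hr₀ s hs', abs_of_nonneg (by linarith)]
  simp [s]

theorem IsGeodesicFrom.le_dist_of_mem_image {γ : ℝ → X} {v D : ℝ} {m x y : X}
    (hγ : IsGeodesicFrom γ v x y) (hxy : dist x y ≤ D + 1)
    (hx : 2 * (D + 1) ≤ dist m x ∨ x = y) (hy : D ≤ dist m y) {p : X}
    (hp : p ∈ γ '' Icc 0 v) : D ≤ dist m p := by
  obtain ⟨t, ht, rfl⟩ := hp
  have hxt : dist x (γ t) ≤ dist x y := by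
    rw [← hγ.2.1, hγ.1.dist_zero_eq ht, hγ.2.1, ← hγ.length_eq]; exact ht.2
  have := dist_triangle_right m x (γ t)
  rcases hx with hx | rfl
  · linarith
  · rw [dist_self] at hxt; linarith

theorem exists_chain_outside_ball {lam C u D : ℝ} {α : ℝ → X} {m x₁ x₂ y₁ y₂ : X}
    (hgeo : IsGeodesicSpace X) (hα : IsQuasigeodesicOn lam C α u) (hlam : 0 < lam)
    (hfar : ∀ y ∈ α '' Icc 0 u, D ≤ dist m y)
    (hy₁ : y₁ ∈ α '' Icc 0 u) (hy₂ : y₂ ∈ α '' Icc 0 u)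
    (hxy₁ : dist x₁ y₁ ≤ D + 1) (hxy₂ : dist x₂ y₂ ≤ D + 1)
    (hx₁ : 2 * (D + 1) ≤ dist m x₁ ∨ x₁ = y₁) (hx₂ : 2 * (D + 1) ≤ dist m x₂ ∨ x₂ = y₂)
    (hx₁₂ : dist x₁ x₂ ≤ 4 * (D + 1)) :
    ∃ (n : ℕ) (z : ℕ → X), (n : ℝ) ≤ (6 * lam + 2) * D + (lam * (C + 6) + 5) ∧ z 0 = x₁ ∧
      z n = x₂ ∧ (∀ i, D ≤ dist m (z i)) ∧ ∀ i, dist (z i) (z (i + 1)) ≤ lam + C + 1 := by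
  have hC := hα.const_nonneg
  obtain ⟨t₁, ht₁, rfl⟩ := hy₁
  obtain ⟨t₂, ht₂, rfl⟩ := hy₂
  obtain ⟨γ₁, v₁, hγ₁⟩ := hgeo x₁ (α t₁)
  obtain ⟨γ₂, v₂, hγ₂⟩ := hgeo x₂ (α t₂)
  obtain ⟨n₁, z₁, hn₁, hz₁0, hz₁n, hz₁, hz₁K⟩ := hγ₁.exists_chain
  obtain ⟨n₂, z₂, hn₂, hz₂0, hz₂n, hz₂, hz₂K⟩ := hα.exists_chain hlam ht₁ ht₂
  obtain ⟨n₃, z₃, hn₃, hz₃0, hz₃n, hz₃, hz₃K⟩ := hγ₂.reverse.exists_chain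
  rw [image_comp_const_sub_Icc] at hz₃
  obtain ⟨z', hz'0, hz'n, hz', hz'K⟩ :=
    exists_chain_append (K := lam + C + 1) (P := (D ≤ dist m ·))
      (fun i => (hz₂K i).trans (by linarith)) (fun i => (hz₃K i).trans (by linarith))
      (fun i => hfar _ (hz₂ i))
      (fun i => hγ₂.le_dist_of_mem_image hxy₂ hx₂ (hfar _ ⟨t₂, ht₂, rfl⟩) (hz₃ i))
      (hz₂n.trans hz₃0.symm)
  obtain ⟨z, hz0, hzn, hz, hzK⟩ :=
    exists_chain_append (K := lam + C + 1) (P := (D ≤ dist m ·))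
      (fun i => (hz₁K i).trans (by linarith)) hz'K
      (fun i => hγ₁.le_dist_of_mem_image hxy₁ hx₁ (hfar _ ⟨t₁, ht₁, rfl⟩) (hz₁ i)) hz'
      (hz₁n.trans (hz'0.trans hz₂0).symm)
  refine ⟨n₁ + (n₂ + n₃), z, ?_, hz0.trans hz₁0, (hzn _).trans ((hz'n n₃).trans hz₃n), hz, hzK⟩
  have hv₁ : v₁ ≤ D + 1 := hγ₁.length_eq ▸ hxy₁
  have hv₂ : v₂ ≤ D + 1 := hγ₂.length_eq ▸ hxy₂
  have hα₁₂ : dist (α t₁) (α t₂) ≤ 6 * (D + 1) := by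
    linarith [dist_triangle4 (α t₁) x₁ x₂ (α t₂), dist_comm (α t₁) x₁]
  have := mul_le_mul_of_nonneg_left (add_le_add_right hα₁₂ C) hlam.le
  push_cast
  linarith

/-- `le_of_le_mul_clog` with the step bound `lam + C + 1` and the chain length
`(6 lam + 2) D + lam (C + 6) + 5` of `exists_chain_outside_ball`. -/
def morseConst (δ lam C : ℝ) : ℝ :=
  δ * (4 * (6 * lam + 2) * δ + 4 * (6 * lam + 2) * (lam + C + 1) + 4 * (lam * (C + 6) + 5) + 1) +
    (lam + C + 1)

theorem morseConst_nonneg {δ lam C : ℝ} (hδ : 0 ≤ δ) (hlam : 0 ≤ lam) (hC : 0 ≤ C) :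
    0 ≤ morseConst δ lam C := by
  unfold morseConst; positivity

theorem IsQuasigeodesicOn.infDist_le_morseConst {δ lam C u ℓ r : ℝ} {α g : ℝ → X}
    (hgeo : IsGeodesicSpace X) (hX : IsDeltaHyperbolic X δ) (hδ : 0 ≤ δ)
    (hα : IsQuasigeodesicOn lam C α u) (hlam : 0 < lam) (hg : IsGeodesicFrom g ℓ (α 0) (α u))
    (hr : r ∈ Icc 0 ℓ) : infDist (g r) (α '' Icc 0 u) ≤ morseConst δ lam C := by
  set S := α '' Icc 0 u
  obtain ⟨r₀, hr₀, hmax⟩ := isCompact_Icc.exists_isMaxOn (nonempty_Icc.2 hg.1.1)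
    ((continuous_infDist_pt S).comp_continuousOn hg.1.continuousOn)
  set D := infDist (g r₀) S
  have hD : ∀ r ∈ Icc 0 ℓ, infDist (g r) S ≤ D := fun r hr => hmax hr
  refine (hD r hr).trans ?_
  have hg0 : g 0 ∈ S := hg.2.1 ▸ mem_image_of_mem α (left_mem_Icc.2 hα.1)
  have hgℓ : g (ℓ - 0) ∈ S := by
    rw [sub_zero, hg.2.2]; exact mem_image_of_mem α (right_mem_Icc.2 hα.1)
  obtain ⟨s₁, hs₁, y₁, hy₁, hrs₁, hsy₁, hfar₁⟩ := exists_detour_start hg.1 hg0 hD hr₀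
  obtain ⟨s₂, hs₂, y₂, hy₂, hrs₂, hsy₂, hfar₂⟩ := exists_detour_start hg.1.reverse hgℓ
    (fun r hr => hD (ℓ - r) ⟨by linarith [hr.2], by linarith [hr.1]⟩)
    (r₀ := ℓ - r₀) ⟨by linarith [hr₀.2], by linarith [hr₀.1]⟩
  simp only [sub_sub_cancel] at hfar₂
  have hs₁ℓ : s₁ ∈ Icc 0 ℓ := ⟨hs₁.1, by linarith [hs₁.2, hr₀.2]⟩
  have hs₂ℓ : ℓ - s₂ ∈ Icc 0 ℓ := ⟨by linarith [hs₂.2, hr₀.1], by linarith [hs₂.1]⟩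
  have hs₁₂ : s₁ ≤ ℓ - s₂ := by linarith [hs₁.2, hs₂.2]
  have hx₁₂ : dist (g s₁) (g (ℓ - s₂)) ≤ 4 * (D + 1) := by
    rw [hg.1.2 s₁ hs₁ℓ (ℓ - s₂) hs₂ℓ, abs_sub_comm, abs_of_nonneg (by linarith)]
    linarith
  obtain ⟨n, z, hn, hz0, hzn, hzfar, hzK⟩ := exists_chain_outside_ball hgeo hα hlam
    (fun y hy => infDist_le_dist_of_mem hy) hy₁ hy₂ hsy₁ hsy₂ hfar₁ hfar₂ hx₁₂
  have hgz := hg.1.shift hs₁.1 hs₁₂ hs₂ℓ.2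
  rw [← hz0, ← hzn] at hgz
  obtain ⟨k, hk⟩ := exists_dist_le_of_chain (y := g r₀) hgeo hX hzK
    (Nat.le_pow_clog one_lt_two n) hgz
    ⟨r₀ - s₁, ⟨by linarith [hs₁.2], by linarith [hs₂.2]⟩, by simp⟩
  have hC := hα.const_nonneg
  have hD0 : 0 ≤ D := infDist_nonneg
  exact le_of_le_mul_clog hδ (by linarith) (by linarith) (by positivity) hn ((hzfar k).trans hk)

/-- Choosing `f x = g x` whenever `g x ∈ S` keeps the endpoints. -/
theorem IsGeodesicFrom.exists_quasigeodesic_of_infDist_lt {g : ℝ → X} {v Q : ℝ} {a b : X}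
    {S : Set X} (hg : IsGeodesicFrom g v a b) (ha : a ∈ S) (hb : b ∈ S)
    (hS : ∀ x ∈ Icc 0 v, infDist (g x) S < Q) :
    ∃ (f : ℝ → X) (w : ℝ), IsQuasigeodesicOn 1 (2 * Q) f w ∧ f 0 = a ∧ f w = b ∧
      f '' Icc 0 w ⊆ S := by
  have hQ : 0 < Q := infDist_nonneg.trans_lt (hS 0 (left_mem_Icc.2 hg.1.1))
  have : ∀ x, ∃ y ∈ S, (x ∈ Icc 0 v → dist (g x) y < Q) ∧ (g x ∈ S → y = g x) := by
    intro x
    by_cases hx : g x ∈ S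
    · exact ⟨g x, hx, fun _ => by simpa using hQ, fun _ => rfl⟩
    by_cases hxv : x ∈ Icc 0 v
    · obtain ⟨y, hy, hxy⟩ := (infDist_lt_iff ⟨a, ha⟩).1 (hS x hxv)
      exact ⟨y, hy, fun _ => hxy, fun h => absurd h hx⟩
    · exact ⟨a, ha, fun h => absurd h hxv, fun h => absurd h hx⟩
  choose f hfS hfg hfx using this
  refine ⟨f, v, ⟨hg.1.1, fun x hx y hy => ?_⟩, ?_, ?_, ?_⟩
  · have hgxy := hg.1.2 x hx y hy
    have := hfg x hx
    have := hfg y hy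
    have := dist_triangle4 (f x) (g x) (g y) (f y)
    have := dist_triangle4 (g x) (f x) (f y) (g y)
    simp only [inv_one, one_mul]
    constructor <;> linarith [dist_comm (f x) (g x), dist_comm (f y) (g y)]
  · rw [hfx 0 (hg.2.1 ▸ ha), hg.2.1]
  · rw [hfx v (hg.2.2 ▸ hb), hg.2.2]
  · rintro _ ⟨x, -, rfl⟩
    exact hfS x

theorem IsQuasigeodesicSubspace.infDist_le_morseConst {δ lam C v x : ℝ} {A : Set X} {a a' : X}
    {g : ℝ → X} (hgeo : IsGeodesicSpace X) (hX : IsDeltaHyperbolic X δ) (hδ : 0 ≤ δ)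
    (hlam : 0 < lam) (hA : IsQuasigeodesicSubspace lam C A) (ha : a ∈ A) (ha' : a' ∈ A)
    (hg : IsGeodesicFrom g v a a') (hx : x ∈ Icc 0 v) :
    infDist (g x) A ≤ morseConst δ lam C := by
  obtain ⟨α, u, hα, hα0, hαu, hαA⟩ := hA a ha a' ha'
  rw [← hα0, ← hαu] at hg
  exact (infDist_le_infDist_of_subset hαA ⟨α 0, mem_image_of_mem α (left_mem_Icc.2 hα.1)⟩).trans
    (hα.infDist_le_morseConst hgeo hX hδ hlam hg hx)

theorem IsQuasigeodesicSubspace.union {δ lam C : ℝ} {A B : Set X} {p : X}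
    (hgeo : IsGeodesicSpace X) (hX : IsDeltaHyperbolic X δ) (hδ : 0 ≤ δ) (hlam : 0 < lam)
    (hA : IsQuasigeodesicSubspace lam C A) (hB : IsQuasigeodesicSubspace lam C B)
    (hpA : p ∈ A) (hpB : p ∈ B) :
    IsQuasigeodesicSubspace 1 (2 * (δ + morseConst δ lam C + 1)) (A ∪ B) := by
  have hnear : ∀ a ∈ A ∪ B, ∀ f v, IsGeodesicFrom f v p a →
      ∀ y ∈ f '' Icc 0 v, infDist y (A ∪ B) ≤ morseConst δ lam C := by
    rintro a (ha | ha) f v hf _ ⟨x, hx, rfl⟩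
    · exact (infDist_le_infDist_of_subset subset_union_left ⟨p, hpA⟩).trans
        (hA.infDist_le_morseConst hgeo hX hδ hlam hpA ha hf hx)
    · exact (infDist_le_infDist_of_subset subset_union_right ⟨p, hpB⟩).trans
        (hB.infDist_le_morseConst hgeo hX hδ hlam hpB ha hf hx)
  intro a ha b hb
  obtain ⟨g, v, hg⟩ := hgeo a b
  refine hg.exists_quasigeodesic_of_infDist_lt ha hb fun x hx => ?_
  obtain ⟨f₁, v₁, hf₁⟩ := hgeo p a
  obtain ⟨f₃, v₃, hf₃⟩ := hgeo p b
  obtain ⟨y, hy, hxy⟩ := hX.exists_dist_le hf₁ hg hf₃ hx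
  have hyAB := hy.elim (hnear a ha f₁ v₁ hf₁ y) (hnear b hb f₃ v₃ hf₃ y)
  linarith [infDist_le_infDist_add_dist (x := g x) (y := y) (s := A ∪ B)]

end

/-- In a δ-hyperbolic geodesic space, for all λ, C > 0 there are λ', C' > 0
such that the union of two intersecting (λ, C)-quasigeodesic subspaces is a
(λ', C')-quasigeodesic subspace. -/
theorem union_of_quasigeodesic_subspaces {X : Type*} [MetricSpace X] (δ : ℝ)
    (hgeo : IsGeodesicSpace X) (hhyp : IsDeltaHyperbolic X δ) :
    ∀ lam C : ℝ, 0 < lam → 0 < C → ∃ lam' C' : ℝ, 0 < lam' ∧ 0 < C' ∧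
      ∀ A B : Set X, IsQuasigeodesicSubspace lam C A → IsQuasigeodesicSubspace lam C B →
        (A ∩ B).Nonempty → IsQuasigeodesicSubspace lam' C' (A ∪ B) := by
  intro lam C hlam hC
  have hδ : 0 ≤ max δ 0 := le_max_right δ 0
  have hR := morseConst_nonneg hδ hlam.le hC.le
  refine ⟨1, 2 * (max δ 0 + morseConst (max δ 0) lam C + 1), one_pos, by positivity, ?_⟩
  rintro A B hA hB ⟨p, hpA, hpB⟩
  exact hA.union hgeo (hhyp.mono (le_max_left δ 0)) hδ hlam hB hpA hpB
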